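/- Let v, w be unit vectors in ℂ² with 0 < |⟨v,w⟩| < 1, let p_v, p_w be the rank-one projections onto their spans, and for δ ∈ [0,1] let σ_δ = (1−δ)p_v + δ p_w. For any sequence of projections p^{(n)} on (ℂ²)^{⊗n} with p^{(n)} ≥ p_w^{⊗n}, it holds that tr(σ_δ^{⊗n} p^{(n)}) ≥ (δ + (1−δ)|⟨v,w⟩|²)^n ≥ |⟨v,w⟩|^{2n}. In particular liminf_{n→∞} (1/n) log tr(σ_δ^{⊗n} p^{(n)}) ≥ −2 log(1/|⟨v,w⟩|) > −∞, uniformly in δ. -/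

import Mathlib

open Filter
open scoped ComplexOrder Classical

/-- `n`-fold tensor power of a `d×d` matrix, realized on the index set `Fin n → Fin d`. -/
noncomputable def tpow {d : ℕ} (ρ : Matrix (Fin d) (Fin d) ℂ) (n : ℕ) :
    Matrix (Fin n → Fin d) (Fin n → Fin d) ℂ :=
  Matrix.of fun x y => ∏ i, ρ (x i) (y i)

/-- Base-2 functional calculus logarithm of a Hermitian matrix, with the convention
`log 0 = 0` on the kernel (and junk value `0` on non-Hermitian matrices). -/
noncomputable def matLog2 {m : Type*} [Fintype m] [DecidableEq m]
    (ρ : Matrix m m ℂ) : Matrix m m ℂ :=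
  if h : ρ.IsHermitian then
    (h.eigenvectorUnitary : Matrix m m ℂ) *
      Matrix.diagonal (fun i => (Real.logb 2 (h.eigenvalues i) : ℂ)) *
      (star (h.eigenvectorUnitary : Matrix m m ℂ))
  else 0

/-- Quantum relative entropy `S(ρ,σ) = tr ρ (log ρ − log σ)` (base 2); this real-valued
formula is meaningful when `supp ρ ≤ supp σ`. -/
noncomputable def qRelEnt {m : Type*} [Fintype m] [DecidableEq m]
    (ρ σ : Matrix m m ℂ) : ℝ :=
  ((ρ * (matLog2 ρ - matLog2 σ)).trace).re

/-- Support condition `supp ρ ≤ supp σ` (for PSD matrices: `ker σ ⊆ ker ρ`). -/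
def SuppLe {m : Type*} [Fintype m] (ρ σ : Matrix m m ℂ) : Prop :=
  ∀ v, σ.mulVec v = 0 → ρ.mulVec v = 0

/-- Quantum relative entropy with value `⊤` when `supp ρ ≤ supp σ` fails. -/
noncomputable def qRelEntE {m : Type*} [Fintype m] [DecidableEq m]
    (ρ σ : Matrix m m ℂ) : EReal :=
  if SuppLe ρ σ then ((qRelEnt ρ σ : ℝ) : EReal) else ⊤

/-- Von Neumann entropy (base 2). -/
noncomputable def vNent {m : Type*} [Fintype m] [DecidableEq m]
    (ρ : Matrix m m ℂ) : ℝ :=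
  if h : ρ.IsHermitian then -∑ i, (h.eigenvalues i) * Real.logb 2 (h.eigenvalues i) else 0

/-- Density operator. -/
def IsDensity {m : Type*} [Fintype m] (ρ : Matrix m m ℂ) : Prop :=
  ρ.PosSemidef ∧ ρ.trace = 1

/-- Orthogonal projection. -/
def IsProjn {m : Type*} [Fintype m] (p : Matrix m m ℂ) : Prop :=
  p.IsHermitian ∧ p * p = p

/-- Base-2 logarithm with value `⊥` at nonpositive reals. -/
noncomputable def elog2 (t : ℝ) : EReal := if t ≤ 0 then ⊥ else ((Real.logb 2 t : ℝ) : EReal)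

/-- Inner product on `ℂ²` (conjugate-linear in the first argument). -/
noncomputable def ip (v w : Fin 2 → ℂ) : ℂ := ∑ i, (starRingEnd ℂ) (v i) * w i

/-- Rank-one projection onto the span of a unit vector. -/
noncomputable def rk1 (v : Fin 2 → ℂ) : Matrix (Fin 2) (Fin 2) ℂ :=
  Matrix.of fun i j => v i * (starRingEnd ℂ) (v j)

/-!
Both `σ_δ^{⊗n}` and `p⁽ⁿ⁾ - p_w^{⊗n}` are positive semidefinite, so
`tr(σ_δ^{⊗n} p⁽ⁿ⁾) ≥ tr(σ_δ^{⊗n} p_w^{⊗n}) = tr(σ_δ p_w)ⁿ`, and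
`tr(σ_δ p_w) = δ + (1 - δ)|⟨v,w⟩|² ≥ |⟨v,w⟩|²`. Taking `(1/n) log` of
`|⟨v,w⟩|^{2n} ≤ tr(σ_δ^{⊗n} p⁽ⁿ⁾)` bounds the liminf by `2 log |⟨v,w⟩|` for every `δ`.
-/

open Matrix

section TensorPower

variable {d n : ℕ}

lemma tpow_mul (A B : Matrix (Fin d) (Fin d) ℂ) : tpow (A * B) n = tpow A n * tpow B n := by
  ext x y
  simp only [tpow, of_apply, mul_apply, Finset.prod_univ_sum, Finset.prod_mul_distrib]
  rfl

lemma trace_tpow (A : Matrix (Fin d) (Fin d) ℂ) : (tpow A n).trace = A.trace ^ n := by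
  simp only [trace, diag, tpow, of_apply, ← Fin.prod_const, Finset.prod_univ_sum]
  rfl

lemma conjTranspose_tpow (A : Matrix (Fin d) (Fin d) ℂ) : (tpow A n)ᴴ = tpow Aᴴ n := by
  ext x y
  simp [tpow, conjTranspose_apply]

open scoped MatrixOrder in
lemma Matrix.PosSemidef.tpow {A : Matrix (Fin d) (Fin d) ℂ} (hA : A.PosSemidef) :
    (_root_.tpow A n).PosSemidef := by
  have hsqrt : _root_.tpow A n = (_root_.tpow (CFC.sqrt A) n)ᴴ * _root_.tpow (CFC.sqrt A) n := by
    rw [conjTranspose_tpow, ← tpow_mul, (CFC.sqrt_nonneg A).posSemidef.1,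
      CFC.sqrt_mul_sqrt_self A hA.nonneg]
  rw [hsqrt]
  exact posSemidef_conjTranspose_mul_self _

end TensorPower

section TraceMonotone

variable {m 𝕜 : Type*} [Fintype m] [DecidableEq m] [RCLike 𝕜] {A : Matrix m m 𝕜}

open scoped MatrixOrder in
lemma Matrix.PosSemidef.trace_mul_nonneg {B : Matrix m m 𝕜} (hA : A.PosSemidef)
    (hB : B.PosSemidef) : 0 ≤ (A * B).trace := by
  have hsqrt := (CFC.sqrt_nonneg B).posSemidef.1
  calc 0 ≤ (CFC.sqrt B * A * (CFC.sqrt B)ᴴ).trace :=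
        (hA.mul_mul_conjTranspose_same _).trace_nonneg
    _ = (A * B).trace := by
      rw [hsqrt, trace_mul_cycle, CFC.sqrt_mul_sqrt_self B hB.nonneg, trace_mul_comm]

lemma Matrix.PosSemidef.trace_mul_le_trace_mul {P Q : Matrix m m 𝕜} (hA : A.PosSemidef)
    (hPQ : (P - Q).PosSemidef) : (A * Q).trace ≤ (A * P).trace := by
  simpa [Matrix.mul_sub, trace_sub] using hA.trace_mul_nonneg hPQ

end TraceMonotone

lemma trace_mul_pow_le_trace_tpow_mul {d n : ℕ} {A Q : Matrix (Fin d) (Fin d) ℂ}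
    (hA : A.PosSemidef) {P : Matrix (Fin n → Fin d) (Fin n → Fin d) ℂ}
    (hPQ : (P - tpow Q n).PosSemidef) :
    (A * Q).trace ^ n ≤ (tpow A n * P).trace := by
  rw [← trace_tpow, tpow_mul]
  exact hA.tpow.trace_mul_le_trace_mul hPQ

lemma rk1_eq_vecMulVec (a : Fin 2 → ℂ) : rk1 a = vecMulVec a (star a) := rfl

lemma rk1_posSemidef (a : Fin 2 → ℂ) : (rk1 a).PosSemidef := by
  rw [rk1_eq_vecMulVec]
  exact posSemidef_vecMulVec_self_star a

lemma trace_rk1_mul_rk1 (a b : Fin 2 → ℂ) :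
    (rk1 a * rk1 b).trace = ((‖ip a b‖ ^ 2 : ℝ) : ℂ) := by
  have hconj : (rk1 a * rk1 b).trace = ip a b * (starRingEnd ℂ) (ip a b) := by
    simp only [rk1, ip, trace, diag, mul_apply, of_apply, map_sum, map_mul, Complex.conj_conj,
      Finset.sum_mul_sum]
    rw [Finset.sum_comm]
    exact Finset.sum_congr rfl fun i _ => Finset.sum_congr rfl fun j _ => by ring
  rw [hconj, Complex.mul_conj, Complex.normSq_eq_norm_sq]

lemma mixture_posSemidef {m : Type*} [Fintype m] {ρ σ : Matrix m m ℂ}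
    (hρ : ρ.PosSemidef) (hσ : σ.PosSemidef) {δ : ℝ} (hδ0 : 0 ≤ δ) (hδ1 : δ ≤ 1) :
    ((1 - (δ : ℂ)) • ρ + (δ : ℂ) • σ).PosSemidef := by
  refine (hρ.smul ?_).add (hσ.smul (Complex.zero_le_real.mpr hδ0))
  exact_mod_cast Complex.zero_le_real.mpr (sub_nonneg.mpr hδ1)

lemma trace_mixture_mul_rk1 (v w : Fin 2 → ℂ) (hw : ip w w = 1) (δ : ℝ) :
    (((1 - (δ : ℂ)) • rk1 v + (δ : ℂ) • rk1 w) * rk1 w).trace =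
      ((δ + (1 - δ) * ‖ip v w‖ ^ 2 : ℝ) : ℂ) := by
  rw [Matrix.add_mul, smul_mul, smul_mul, trace_add, trace_smul, trace_smul, trace_rk1_mul_rk1,
    trace_rk1_mul_rk1, hw, norm_one]
  push_cast
  ring

lemma elog2_of_pos {t : ℝ} (ht : 0 < t) : elog2 t = (Real.logb 2 t : EReal) := by
  rw [elog2, if_neg ht.not_ge]

lemma le_liminf_elog2_mul_inv_of_pow_le {a : ℝ} (ha : 0 < a) {t : ℕ → ℝ}
    (ht : ∀ᶠ n in atTop, a ^ n ≤ t n) :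
    (Real.logb 2 a : EReal) ≤
      liminf (fun n : ℕ => elog2 (t n) * (((n : ℝ)⁻¹ : ℝ) : EReal)) atTop := by
  refine le_liminf_of_le (by isBoundedDefault) ?_
  filter_upwards [ht, eventually_ge_atTop 1] with n hn hn1
  have hn0 : (0 : ℝ) < n := by exact_mod_cast hn1
  have hlog : n * Real.logb 2 a ≤ Real.logb 2 (t n) := by
    rw [← Real.logb_pow]
    exact Real.logb_le_logb_of_le one_lt_two (by positivity) hn
  rw [elog2_of_pos ((pow_pos ha n).trans_le hn), ← EReal.coe_mul, EReal.coe_le_coe_iff,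
    le_mul_inv_iff₀ hn0]
  linarith

theorem empirical_state_separation_bounded_general (v w : Fin 2 → ℂ)
    (hw : ip w w = 1)
    (h0 : 0 < ‖ip v w‖) (h1 : ‖ip v w‖ < 1)
    (δ : ℝ) (hδ0 : 0 ≤ δ) (hδ1 : δ ≤ 1)
    (p : (n : ℕ) → Matrix (Fin n → Fin 2) (Fin n → Fin 2) ℂ)
    (hdom : ∀ n, (p n - tpow (rk1 w) n).PosSemidef) :
    (∀ n : ℕ,
      (δ + (1 - δ) * (‖ip v w‖) ^ 2) ^ n ≤
          ((tpow ((1 - (δ : ℂ)) • rk1 v + (δ : ℂ) • rk1 w) n * p n).trace).re ∧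
      (‖ip v w‖) ^ (2 * n) ≤ (δ + (1 - δ) * (‖ip v w‖) ^ 2) ^ n) ∧
    ((-(2 * Real.logb 2 (1 / ‖ip v w‖)) : ℝ) : EReal) ≤
        Filter.liminf (fun n : ℕ =>
          elog2 (((tpow ((1 - (δ : ℂ)) • rk1 v + (δ : ℂ) • rk1 w) n * p n).trace).re) *
            (((n : ℝ)⁻¹ : ℝ) : EReal)) atTop ∧
    (⊥ : EReal) <
        Filter.liminf (fun n : ℕ =>
          elog2 (((tpow ((1 - (δ : ℂ)) • rk1 v + (δ : ℂ) • rk1 w) n * p n).trace).re) *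
            (((n : ℝ)⁻¹ : ℝ) : EReal)) atTop := by
  set c := ‖ip v w‖
  set σ := (1 - (δ : ℂ)) • rk1 v + (δ : ℂ) • rk1 w
  have hσ : σ.PosSemidef := mixture_posSemidef (rk1_posSemidef v) (rk1_posSemidef w) hδ0 hδ1
  have htrace (n : ℕ) : (δ + (1 - δ) * c ^ 2) ^ n ≤ ((tpow σ n * p n).trace).re := by
    have h := (Complex.le_def.mp (trace_mul_pow_le_trace_tpow_mul hσ (hdom n))).1
    rwa [trace_mixture_mul_rk1 v w hw, ← Complex.ofReal_pow, Complex.ofReal_re] at h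
  have hpow (n : ℕ) : c ^ (2 * n) ≤ (δ + (1 - δ) * c ^ 2) ^ n := by
    rw [pow_mul]
    have hc2 : c ^ 2 ≤ 1 := pow_le_one₀ h0.le h1.le
    exact pow_le_pow_left₀ (by positivity) (by nlinarith [mul_nonneg hδ0 (sub_nonneg.2 hc2)]) n
  have hlim := le_liminf_elog2_mul_inv_of_pow_le (pow_pos h0 2)
    (t := fun n => ((tpow σ n * p n).trace).re)
    (.of_forall fun n => by rw [← pow_mul]; exact (hpow n).trans (htrace n))
  have hrate : Real.logb 2 (c ^ 2) = -(2 * Real.logb 2 (1 / c)) := by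
    rw [Real.logb_pow, one_div, Real.logb_inv]
    push_cast
    ring
  rw [hrate] at hlim
  exact ⟨fun n => ⟨htrace n, hpow n⟩, hlim, (EReal.bot_lt_coe _).trans_le hlim⟩

/-- Empirical-state typical projectors cannot beat the overlap rate: if `p⁽ⁿ⁾ ≥ p_w^{⊗n}`,
then `tr(σ_δ^{⊗n} p⁽ⁿ⁾) ≥ (δ + (1−δ)|⟨v,w⟩|²)ⁿ ≥ |⟨v,w⟩|^{2n}`, so the separation
exponent is bounded below by `−2 log(1/|⟨v,w⟩|) > −∞`, uniformly in `δ`. -/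
theorem empirical_state_separation_bounded (v w : Fin 2 → ℂ)
    (hv : ip v v = 1) (hw : ip w w = 1)
    (h0 : 0 < ‖ip v w‖) (h1 : ‖ip v w‖ < 1)
    (δ : ℝ) (hδ0 : 0 ≤ δ) (hδ1 : δ ≤ 1)
    (p : (n : ℕ) → Matrix (Fin n → Fin 2) (Fin n → Fin 2) ℂ)
    (hp : ∀ n, IsProjn (p n))
    (hdom : ∀ n, (p n - tpow (rk1 w) n).PosSemidef) :
    (∀ n : ℕ,
      (δ + (1 - δ) * (‖ip v w‖) ^ 2) ^ n ≤
          ((tpow ((1 - (δ : ℂ)) • rk1 v + (δ : ℂ) • rk1 w) n * p n).trace).re ∧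
      (‖ip v w‖) ^ (2 * n) ≤ (δ + (1 - δ) * (‖ip v w‖) ^ 2) ^ n) ∧
    ((-(2 * Real.logb 2 (1 / ‖ip v w‖)) : ℝ) : EReal) ≤
        Filter.liminf (fun n : ℕ =>
          elog2 (((tpow ((1 - (δ : ℂ)) • rk1 v + (δ : ℂ) • rk1 w) n * p n).trace).re) *
            (((n : ℝ)⁻¹ : ℝ) : EReal)) atTop ∧
    (⊥ : EReal) <
        Filter.liminf (fun n : ℕ =>
          elog2 (((tpow ((1 - (δ : ℂ)) • rk1 v + (δ : ℂ) • rk1 w) n * p n).trace).re) *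
            (((n : ℝ)⁻¹ : ℝ) : EReal)) atTop :=
  empirical_state_separation_bounded_general v w hw h0 h1 δ hδ0 hδ1 p hdom
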